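/- arXiv:2307.05877 — 4 statements merged into one kernel-verified Lean document; each statement's English description precedes it below -/
import Mathlib

section
/- The only positive integers n for which (2n+1)(2n−1) has no prime factor other than 3 and 5 (i.e., (2n+1)(2n−1) = 3^u · 5^v for some nonnegative integers u, v) are n ∈ {1, 2, 13}. -/
set_option maxRecDepth 10000

private lemma pow_mod_cycle (b m k a : ℕ) (h : b ^ k % m = 1 % m) :
    b ^ a % m = b ^ (a % k) % m := by
  have h' : b ^ k ≡ 1 [MOD m] := h
  have : b ^ a ≡ b ^ (a % k) [MOD m] := by
    conv_lhs => rw [← Nat.div_add_mod a k, pow_add, pow_mul]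
    calc (b ^ k) ^ (a / k) * b ^ (a % k)
        ≡ 1 ^ (a / k) * b ^ (a % k) [MOD m] := (h'.pow _).mul_right _
      _ = b ^ (a % k) := by rw [one_pow, one_mul]
  exact this

/-- No solutions to `3^p = 5^t + 2` with `t ≥ 3`. -/
private lemma lemB (p t : ℕ) (ht : 3 ≤ t) (h : 3 ^ p = 5 ^ t + 2) : False := by
  have h125 : (125 : ℕ) ≤ 5 ^ t := by
    calc (125 : ℕ) = 5 ^ 3 := by norm_num
      _ ≤ 5 ^ t := Nat.pow_le_pow_right (by norm_num) ht
  have hp5 : 5 ≤ p := by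
    by_contra hp
    push_neg at hp
    interval_cases p <;> omega
  have h0 : 3 ^ p % 243 = 0 := by
    have hd : (3 : ℕ) ^ 5 ∣ 3 ^ p := pow_dvd_pow 3 hp5
    have hd' : (243 : ℕ) ∣ 3 ^ p := by norm_num at hd; exact hd
    omega
  have h243 : 5 ^ t % 243 = 241 := by omega
  have hcyc5 : 5 ^ t % 243 = 5 ^ (t % 162) % 243 :=
    pow_mod_cycle 5 243 162 t (by norm_num)
  have ht162 : t % 162 = 74 := by
    have hlt : t % 162 < 162 := Nat.mod_lt _ (by norm_num)
    have key : ∀ r < 162, 5 ^ r % 243 = 241 → r = 74 := by decide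
    exact key _ hlt (by omega)
  have h5t : 5 ^ t % 109 = 35 := by
    have h1 := pow_mod_cycle 5 109 162 t (by norm_num)
    rw [ht162] at h1
    norm_num at h1
    exact h1
  have h3p : 3 ^ p % 109 = 3 ^ (p % 27) % 109 :=
    pow_mod_cycle 3 109 27 p (by norm_num)
  have hlt : p % 27 < 27 := Nat.mod_lt _ (by norm_num)
  have key : ∀ r < 27, 3 ^ r % 109 ≠ 37 := by decide
  exact key _ hlt (by omega)

/-- No solutions to `5^q = 3^s + 2` with `s ≥ 2`. -/
private lemma lemA (s q : ℕ) (hs : 2 ≤ s) (h : 5 ^ q = 3 ^ s + 2) : False := by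
  have h0 : 3 ^ s % 9 = 0 := by
    have hd : (3 : ℕ) ^ 2 ∣ 3 ^ s := pow_dvd_pow 3 hs
    have hd' : (9 : ℕ) ∣ 3 ^ s := by norm_num at hd; exact hd
    omega
  have hcyc5 : 5 ^ q % 9 = 5 ^ (q % 6) % 9 := pow_mod_cycle 5 9 6 q (by norm_num)
  have hq6 : q % 6 = 5 := by
    have hlt : q % 6 < 6 := Nat.mod_lt _ (by norm_num)
    have key : ∀ r < 6, 5 ^ r % 9 = 2 → r = 5 := by decide
    exact key _ hlt (by omega)
  have h5q7 : 5 ^ q % 7 = 3 := by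
    have h1 := pow_mod_cycle 5 7 6 q (by norm_num)
    rw [hq6] at h1
    norm_num at h1
    exact h1
  have h3s7 : 3 ^ s % 7 = 3 ^ (s % 6) % 7 := pow_mod_cycle 3 7 6 s (by norm_num)
  have hs6 : s % 6 = 0 := by
    have hlt : s % 6 < 6 := Nat.mod_lt _ (by norm_num)
    have key : ∀ r < 6, 3 ^ r % 7 = 1 → r = 0 := by decide
    exact key _ hlt (by omega)
  have h3s8 : 3 ^ s % 8 = 1 := by
    have h1 := pow_mod_cycle 3 8 2 s (by norm_num)
    have h2 : s % 2 = 0 := by omega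
    rw [h2] at h1
    norm_num at h1
    exact h1
  have h5q8 : 5 ^ q % 8 = 5 := by
    have h1 := pow_mod_cycle 5 8 2 q (by norm_num)
    have h2 : q % 2 = 1 := by omega
    rw [h2] at h1
    norm_num at h1
    exact h1
  omega

private lemma dvd_split {d u v : ℕ} (h : d ∣ 3 ^ u * 5 ^ v) :
    ∃ s t, d = 3 ^ s * 5 ^ t := by
  have hcop : Nat.Coprime (3 ^ u) (5 ^ v) :=
    Nat.Coprime.pow _ _ (by norm_num)
  have heq := (Nat.gcd_mul_gcd_eq_iff_dvd_mul_of_coprime hcop).2 h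
  obtain ⟨s, -, hs⟩ := (Nat.dvd_prime_pow Nat.prime_three).1 (Nat.gcd_dvd_right d (3 ^ u))
  obtain ⟨t, -, hts⟩ := (Nat.dvd_prime_pow (by norm_num : Nat.Prime 5)).1
    (Nat.gcd_dvd_right d (5 ^ v))
  exact ⟨s, t, by rw [← heq, hs, hts]⟩

theorem stmt6 (n : ℕ) (hn : 1 ≤ n) :
    (∃ u v : ℕ, (2 * n + 1) * (2 * n - 1) = 3 ^ u * 5 ^ v) ↔ n = 1 ∨ n = 2 ∨ n = 13 := by
  constructor
  · rintro ⟨u, v, h⟩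
    obtain ⟨p, q, hy⟩ : ∃ p q, 2 * n + 1 = 3 ^ p * 5 ^ q :=
      dvd_split ⟨2 * n - 1, h.symm⟩
    obtain ⟨s, t, hx⟩ : ∃ s t, 2 * n - 1 = 3 ^ s * 5 ^ t :=
      dvd_split ⟨2 * n + 1, by rw [← h]; ring⟩
    have hco : Nat.gcd (2 * n - 1) (2 * n + 1) = 1 := by
      have h1 := Nat.gcd_dvd_left (2 * n - 1) (2 * n + 1)
      have h2 := Nat.gcd_dvd_right (2 * n - 1) (2 * n + 1)
      have h3 : Nat.gcd (2 * n - 1) (2 * n + 1) ∣ 2 := by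
        have h4 := Nat.dvd_sub h2 h1
        have e : 2 * n + 1 - (2 * n - 1) = 2 := by omega
        rwa [e] at h4
      rcases (Nat.dvd_prime Nat.prime_two).1 h3 with h4 | h4
      · exact h4
      · exfalso
        rw [h4] at h2
        omega
    have hps : p = 0 ∨ s = 0 := by
      by_contra hc
      push_neg at hc
      obtain ⟨hp, hs⟩ := hc
      have d1 : (3 : ℕ) ∣ 2 * n + 1 := by
        rw [hy]; exact dvd_mul_of_dvd_left (dvd_pow_self 3 hp) _
      have d2 : (3 : ℕ) ∣ 2 * n - 1 := by
        rw [hx]; exact dvd_mul_of_dvd_left (dvd_pow_self 3 hs) _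
      have h5 : (3 : ℕ) ∣ 1 := hco ▸ Nat.dvd_gcd d2 d1
      omega
    have hqt : q = 0 ∨ t = 0 := by
      by_contra hc
      push_neg at hc
      obtain ⟨hq, ht⟩ := hc
      have d1 : (5 : ℕ) ∣ 2 * n + 1 := by
        rw [hy]; exact dvd_mul_of_dvd_right (dvd_pow_self 5 hq) _
      have d2 : (5 : ℕ) ∣ 2 * n - 1 := by
        rw [hx]; exact dvd_mul_of_dvd_right (dvd_pow_self 5 ht) _
      have h5 : (5 : ℕ) ∣ 1 := hco ▸ Nat.dvd_gcd d2 d1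
      omega
    rcases hps with hp | hs
    · -- p = 0 : 2n+1 = 5^q
      subst hp
      simp only [pow_zero, one_mul] at hy
      rcases hqt with hq | ht
      · -- q = 0 too : 2n+1 = 1, absurd
        subst hq
        simp at hy
        omega
      · -- t = 0 : 2n-1 = 3^s, equation 5^q = 3^s + 2
        subst ht
        simp only [pow_zero, mul_one] at hx
        have heq : 5 ^ q = 3 ^ s + 2 := by omega
        rcases Nat.lt_or_ge s 2 with hs2 | hs2
        · interval_cases s
          · -- 5^q = 3, impossible
            exfalso
            rcases q with _ | q
            · simp at heq
            · have h1 : 1 ≤ 5 ^ q := Nat.one_le_pow _ _ (by norm_num)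
              rw [pow_succ] at heq
              omega
          · -- s = 1 : 2n-1 = 3, n = 2
            right; left
            omega
        · exact (lemA s q hs2 heq).elim
    · -- s = 0 : 2n-1 = 5^t
      subst hs
      simp only [pow_zero, one_mul] at hx
      rcases hqt with hq | ht
      · -- q = 0 : 2n+1 = 3^p, equation 3^p = 5^t + 2
        subst hq
        simp only [pow_zero, mul_one] at hy
        have heq : 3 ^ p = 5 ^ t + 2 := by omega
        rcases Nat.lt_or_ge t 3 with ht3 | ht3
        · interval_cases t
          · -- 5^0 = 1 : 2n-1 = 1, n = 1
            left
            simp at hx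
            omega
          · -- 3^p = 7, impossible
            exfalso
            rcases p with _ | p
            · simp at heq
            · have h1 : 1 ≤ 3 ^ p := Nat.one_le_pow _ _ (by norm_num)
              rw [pow_succ] at heq
              omega
          · -- 2n-1 = 25, n = 13
            right; right
            norm_num at hx
            omega
        · exact (lemB p t ht3 heq).elim
      · -- t = 0 : 2n-1 = 1, n = 1
        subst ht
        simp at hx
        omega
  · rintro (rfl | rfl | rfl)
    · exact ⟨1, 0, by norm_num⟩
    · exact ⟨1, 1, by norm_num⟩
    · exact ⟨3, 2, by norm_num⟩
end

section
/- Define integer sequences (b_j), (c_j) by b_0 = 0, c_0 = 1, b_1 = 1, c_1 = 0, and b_{j+1} = 5b_j + 15b_{j−1}, c_{j+1} = 5c_j + 15c_{j−1}. Then for all j ≥ 2, ν_3(c_j) = 1 and ν_3(b_j) = 0. -/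
lemma val3_one {x : ℤ} (h3 : (3:ℤ) ∣ x) (h9 : ¬(9:ℤ) ∣ x) : padicValInt 3 x = 1 := by
  haveI : Fact (Nat.Prime 3) := ⟨by norm_num⟩
  have hx : x ≠ 0 := by rintro rfl; exact h9 ⟨0, by ring⟩
  have h1 : 1 ≤ padicValInt 3 x := by
    have := (padicValInt_dvd_iff (p := 3) 1 x).mp (by simpa using h3)
    tauto
  have h2 : ¬ 2 ≤ padicValInt 3 x := by
    intro h
    have := (padicValInt_dvd_iff (p := 3) 2 x).mpr (Or.inr h)
    norm_num at this
    exact h9 this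
  omega

lemma val3_zero {x : ℤ} (h3 : ¬(3:ℤ) ∣ x) : padicValInt 3 x = 0 := by
  haveI : Fact (Nat.Prime 3) := ⟨by norm_num⟩
  by_contra h
  have hx : x ≠ 0 := by rintro rfl; exact h3 ⟨0, by ring⟩
  have : (3:ℤ) ^ 1 ∣ x := (padicValInt_dvd_iff (p := 3) 1 x).mpr (Or.inr (by omega))
  exact h3 (by simpa using this)

theorem stmt9 (b c : ℕ → ℤ)
    (hb0 : b 0 = 0) (hc0 : c 0 = 1) (hb1 : b 1 = 1) (hc1 : c 1 = 0)
    (hb : ∀ j ≥ 1, b (j + 1) = 5 * b j + 15 * b (j - 1))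
    (hc : ∀ j ≥ 1, c (j + 1) = 5 * c j + 15 * c (j - 1)) :
    ∀ j ≥ 2, padicValInt 3 (c j) = 1 ∧ padicValInt 3 (b j) = 0 := by
  have key : ∀ j, 2 ≤ j →
      ((b j % 9 = 5 ∧ c j % 9 = 6 ∧ b (j+1) % 9 = 4 ∧ c (j+1) % 9 = 3) ∨
       (b j % 9 = 4 ∧ c j % 9 = 3 ∧ b (j+1) % 9 = 5 ∧ c (j+1) % 9 = 6)) := by
    intro j hj
    induction j with
    | zero => omega
    | succ n ih =>
      rcases Nat.lt_or_ge n 2 with hn | hn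
      · interval_cases n
        · omega
        · -- j = 2
          have e2b := hb 1 (by norm_num)
          have e2c := hc 1 (by norm_num)
          have e3b := hb 2 (by norm_num)
          have e3c := hc 2 (by norm_num)
          simp only [show (2:ℕ) - 1 = 1 from rfl, show (1:ℕ) - 1 = 0 from rfl] at *
          norm_num at e2b e2c e3b e3c ⊢
          left
          constructor
          · omega
          constructor
          · omega
          constructor
          · omega
          · omega
      · have ihn := ih hn
        have eb := hb (n + 1) (by omega)
        have ec := hc (n + 1) (by omega)
        simp only [Nat.add_sub_cancel] at eb ec
        rcases ihn with ⟨h1, h2, h3, h4⟩ | ⟨h1, h2, h3, h4⟩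
        · right; omega
        · left; omega
  intro j hj
  rcases key j hj with ⟨h1, h2, _, _⟩ | ⟨h1, h2, _, _⟩ <;>
    exact ⟨val3_one (by omega) (by omega), val3_zero (by omega)⟩
end

section
/- Define integer sequences (b_j), (c_j) by b_0 = 0, c_0 = 1, b_1 = 1, c_1 = 0, and b_{j+1} = 5b_j + 15b_{j−1}, c_{j+1} = 5c_j + 15c_{j−1}. Then for every even j ≥ 2, ν_5(c_j) = j/2 exactly. -/
theorem stmt11 (b c : ℕ → ℤ)
    (hb0 : b 0 = 0) (hc0 : c 0 = 1) (hb1 : b 1 = 1) (hc1 : c 1 = 0)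
    (hb : ∀ j ≥ 1, b (j + 1) = 5 * b j + 15 * b (j - 1))
    (hc : ∀ j ≥ 1, c (j + 1) = 5 * c j + 15 * c (j - 1)) :
    ∀ j ≥ 2, Even j → 2 * padicValInt 5 (c j) = j := by
  have hdiv : ∀ k : ℕ, (5:ℤ)^k ∣ c (2*k) ∧ (5:ℤ)^(k+1) ∣ c (2*k+1) ∧
      (5:ℤ)^k ∣ b (2*k) ∧ (5:ℤ)^k ∣ b (2*k+1) := by
    intro k
    induction k with
    | zero => simp [hb0, hc0, hb1, hc1]
    | succ k ih =>
      obtain ⟨⟨x, hx⟩, ⟨y, hy⟩, ⟨u, hu⟩, ⟨v, hv⟩⟩ := ih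
      have e1 : c (2*(k+1)) = 5 * c (2*k+1) + 15 * c (2*k) := by
        have := hc (2*k+1) (by omega)
        rw [show 2*k+1-1 = 2*k by omega] at this
        rw [show 2*(k+1) = 2*k+1+1 by ring, this]
      have e2 : c (2*(k+1)+1) = 5 * c (2*(k+1)) + 15 * c (2*k+1) := by
        have := hc (2*(k+1)) (by omega)
        rw [show 2*(k+1)-1 = 2*k+1 by omega] at this
        rw [show 2*(k+1)+1 = 2*(k+1)+1 by ring, this]
      have e3 : b (2*(k+1)) = 5 * b (2*k+1) + 15 * b (2*k) := by
        have := hb (2*k+1) (by omega)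
        rw [show 2*k+1-1 = 2*k by omega] at this
        rw [show 2*(k+1) = 2*k+1+1 by ring, this]
      have e4 : b (2*(k+1)+1) = 5 * b (2*(k+1)) + 15 * b (2*k+1) := by
        have := hb (2*(k+1)) (by omega)
        rw [show 2*(k+1)-1 = 2*k+1 by omega] at this
        rw [this]
      refine ⟨⟨5*y + 3*x, ?_⟩, ⟨(5*y+3*x) + 3*y, ?_⟩, ⟨v + 3*u, ?_⟩, ⟨5*(v+3*u) + 3*v, ?_⟩⟩
      · rw [e1, hx, hy]; ring
      · rw [e2, e1, hx, hy]; ring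
      · rw [e3, hu, hv]; ring
      · rw [e4, e3, hu, hv]; ring
  have hdet : ∀ j : ℕ, c j * b (j+1) - c (j+1) * b j = (-15)^j := by
    intro j
    induction j with
    | zero => simp [hb0, hc0, hb1, hc1]
    | succ j ih =>
      have eb : b (j+2) = 5 * b (j+1) + 15 * b j := by
        have := hb (j+1) (by omega); simpa using this
      have ec : c (j+2) = 5 * c (j+1) + 15 * c j := by
        have := hc (j+1) (by omega); simpa using this
      have : c (j+1) * b (j+1+1) - c (j+1+1) * b (j+1)
          = -15 * (c j * b (j+1) - c (j+1) * b j) := by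
        rw [show j+1+1 = j+2 by ring, eb, ec]; ring
      rw [this, ih, pow_succ]; ring
  intro j hj hev
  obtain ⟨k, hk⟩ := hev
  have hjk : j = 2*k := by omega
  have hk1 : 1 ≤ k := by omega
  obtain ⟨h1, h2, h3, h4⟩ := hdiv k
  have hnot : ¬ (5:ℤ)^(k+1) ∣ c (2*k) := by
    intro h
    have hA : (5:ℤ)^(2*k+1) ∣ c (2*k) * b (2*k+1) := by
      have := mul_dvd_mul h h4
      rwa [show (5:ℤ)^(k+1) * 5^k = 5^(2*k+1) by rw [← pow_add]; ring_nf] at this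
    have hB : (5:ℤ)^(2*k+1) ∣ c (2*k+1) * b (2*k) := by
      have := mul_dvd_mul h2 h3
      rwa [show (5:ℤ)^(k+1) * 5^k = 5^(2*k+1) by rw [← pow_add]; ring_nf] at this
    have hC : (5:ℤ)^(2*k+1) ∣ (-15:ℤ)^(2*k) := by
      rw [← hdet (2*k)]; exact dvd_sub hA hB
    have h15 : (-15:ℤ)^(2*k) = 5^(2*k) * 3^(2*k) := by
      rw [show (-15:ℤ) = (5*3) * (-1) by norm_num, mul_pow, mul_pow]
      rw [Even.neg_one_pow ⟨k, by ring⟩, mul_one]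
    rw [h15, pow_succ] at hC
    have h5 : (5:ℤ) ∣ 3^(2*k) :=
      (mul_dvd_mul_iff_left (pow_ne_zero (2*k) (by norm_num : (5:ℤ) ≠ 0))).mp hC
    have : (5:ℤ) ∣ 3 := (Int.prime_iff_natAbs_prime.mpr (by norm_num)).dvd_of_dvd_pow h5
    norm_num at this
  have hne : c (2*k) ≠ 0 := fun h0 => hnot (h0 ▸ dvd_zero _)
  haveI : Fact (Nat.Prime 5) := ⟨by norm_num⟩
  have hle : k ≤ padicValInt 5 (c (2*k)) := by
    have := (padicValInt_dvd_iff (p := 5) k (c (2*k))).mp (by exact_mod_cast h1)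
    tauto
  have hlt : ¬ (k + 1 ≤ padicValInt 5 (c (2*k))) := by
    intro h
    exact hnot (by exact_mod_cast (padicValInt_dvd_iff (p := 5) (k+1) (c (2*k))).mpr (Or.inr h))
  rw [hjk]
  omega
end

section
/- Let n ≥ 2 and write 2n+1 = k'·3^u with gcd(k',3) = 1, u ≥ 0. Set u_{2j+2} = 1·3·5···(2j+1). Then there exist integers a_0 = 1, a_n = k', and a_1, ..., a_{n−1} such that the polynomial f(x) = ∑_{j=0}^n a_j x^{2j}/u_{2j+2} (which has rational coefficients) is divisible by x^2 − 3 in ℚ[x]. -/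
open Polynomial

open Finset

lemma fact_odd (n : ℕ) : (∏ i ∈ range (n+1), (2*i+1)) * (2^n * n.factorial) = (2*n+1).factorial := by
  induction n with
  | zero => simp
  | succ m ih =>
    have h1 : (2*(m+1)+1).factorial = (2*m+3)*((2*m+2)*(2*m+1).factorial) := by
      have : 2*(m+1)+1 = 2*m+3 := by ring
      rw [this, show 2*m+3 = (2*m+2)+1 from rfl, Nat.factorial_succ,
        show 2*m+2 = (2*m+1)+1 from rfl, Nat.factorial_succ]
    rw [prod_range_succ, h1, ← ih, Nat.factorial_succ, pow_succ]
    ring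

lemma v3_le (n : ℕ) : padicValNat 3 (∏ i ∈ range (n+1), (2*i+1)) ≤ n := by
  have h3 : Fact (Nat.Prime 3) := ⟨by norm_num⟩
  have hD : (∏ i ∈ range (n+1), (2*i+1)) ≠ 0 := by positivity
  have h2 : (2:ℕ)^n * n.factorial ≠ 0 := by positivity
  have hmul := padicValNat.mul (p := 3) hD h2
  rw [fact_odd] at hmul
  have hpow : padicValNat 3 ((2:ℕ)^n) = 0 := by
    apply padicValNat.eq_zero_of_not_dvd
    intro h
    have := Nat.Prime.dvd_of_dvd_pow (by norm_num : Nat.Prime 3) h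
    omega
  have hmul2 := padicValNat.mul (p := 3) (a := (2:ℕ)^n) (b := n.factorial) (by positivity) (Nat.factorial_ne_zero n)
  have hL1 := sub_one_mul_padicValNat_factorial (p := 3) (2*n+1)
  have hL2 := sub_one_mul_padicValNat_factorial (p := 3) n
  have hd1 : (Nat.digits 3 (2*n+1)).sum ≤ 2*n+1 := Nat.digit_sum_le 3 (2*n+1)
  have hd2 : (Nat.digits 3 n).sum ≤ n := Nat.digit_sum_le 3 n
  have hd3 : 1 ≤ (Nat.digits 3 (2*n+1)).sum := by
    have hne : Nat.digits 3 (2*n+1) ≠ [] := Nat.digits_ne_nil_iff_ne_zero.mpr (by omega)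
    have hlast := Nat.getLast_digit_ne_zero 3 (m := 2*n+1) (by omega)
    have hmem : (Nat.digits 3 (2*n+1)).getLast hne ∈ Nat.digits 3 (2*n+1) := List.getLast_mem hne
    calc 1 ≤ (Nat.digits 3 (2*n+1)).getLast hne := Nat.one_le_iff_ne_zero.mpr hlast
    _ ≤ (Nat.digits 3 (2*n+1)).sum := List.single_le_sum (fun x _ => Nat.zero_le x) _ hmem
  omega

lemma gcd_dvd_key (n k' u : ℕ) (hn : 2 ≤ n) (hk' : 2 * n + 1 = k' * 3 ^ u) (hk'3 : ¬ 3 ∣ k') :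
    Nat.gcd (3 * ∏ i ∈ Ico 2 (n+1), (2*i+1)) (3^(n-1) * (2*n+1)) ∣ k' * 3^n := by
  set c1 := 3 * ∏ i ∈ Ico 2 (n+1), (2*i+1) with hc1
  set c2 := 3^(n-1) * (2*n+1) with hc2
  have hc1D : c1 = ∏ i ∈ range (n+1), (2*i+1) := by
    rw [Finset.range_eq_Ico, Finset.prod_eq_prod_Ico_succ_bot (by omega),
      Finset.prod_eq_prod_Ico_succ_bot (by omega)]
    norm_num
    exact hc1
  have hc1pos : 0 < c1 := by rw [hc1D]; positivity
  have hc2pos : 0 < c2 := by positivity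
  set d := Nat.gcd c1 c2 with hd
  have hdpos : 0 < d := Nat.gcd_pos_of_pos_left _ hc1pos
  set s := d.factorization 3 with hs
  set m := d / 3 ^ s with hm
  have hdm : 3 ^ s * m = d := Nat.ordProj_mul_ordCompl_eq_self d 3
  have hcop : Nat.Coprime 3 m := Nat.coprime_ordCompl (by norm_num) (by omega)
  -- s ≤ n
  have hsle : s ≤ n := by
    have h1 : 3 ^ s ∣ c1 := (hdm ▸ dvd_mul_right (3^s) m).trans (Nat.gcd_dvd_left c1 c2)
    have h2 : s ≤ c1.factorization 3 :=
      (Nat.Prime.pow_dvd_iff_le_factorization (by norm_num) (by omega)).mp h1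
    have h3 : c1.factorization 3 = padicValNat 3 c1 := Nat.factorization_def c1 (by norm_num)
    have := v3_le n
    rw [← hc1D] at this
    omega
  -- m ∣ k'
  have hmk : m ∣ k' := by
    have h1 : m ∣ c2 := (hdm ▸ dvd_mul_left m (3^s)).trans (Nat.gcd_dvd_right c1 c2)
    have h2 : c2 = 3^(n-1+u) * k' := by rw [hc2, hk', pow_add]; ring
    rw [h2] at h1
    exact (hcop.symm.pow_right _).dvd_of_dvd_mul_left h1
  calc d = 3 ^ s * m := hdm.symm
  _ ∣ 3 ^ n * k' := mul_dvd_mul (pow_dvd_pow 3 hsle) hmk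
  _ = k' * 3^n := by ring

lemma exists_coeffs (n k' u : ℕ) (hn : 2 ≤ n) (hk' : 2 * n + 1 = k' * 3 ^ u) (hk'3 : ¬ 3 ∣ k') :
    ∃ a : ℕ → ℤ, a 0 = 1 ∧ a n = (k' : ℤ) ∧
      ∑ j ∈ range (n+1), (a j : ℤ) * (3^j * ∏ i ∈ Ico (j+1) (n+1), (2*(i:ℤ)+1)) = 0 := by
  set cz : ℕ → ℤ := fun j => 3^j * ∏ i ∈ Ico (j+1) (n+1), (2*(i:ℤ)+1) with hcz
  set c1 : ℕ := 3 * ∏ i ∈ Ico 2 (n+1), (2*i+1) with hc1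
  set c2 : ℕ := 3^(n-1) * (2*n+1) with hc2
  have hcast1 : cz 1 = (c1 : ℤ) := by
    simp only [hcz, hc1]
    push_cast
    ring
  have hcast2 : cz (n-1) = (c2 : ℤ) := by
    simp only [hcz, hc2]
    have h1 : n - 1 + 1 = n := by omega
    rw [h1, Nat.Ico_succ_singleton, Finset.prod_singleton]
    push_cast [h1]
    ring
  have hcz0 : cz 0 = cz 1 := by
    simp only [hcz]
    rw [Finset.prod_eq_prod_Ico_succ_bot (show 1 < n+1 by omega)]
    norm_num
  have hczn : cz n = 3^n := by simp [hcz]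
  set d : ℕ := Nat.gcd c1 c2 with hd
  obtain ⟨T, hT⟩ := gcd_dvd_key n k' u hn hk' hk'3
  set x := Int.gcdA c1 c2 with hx
  set y := Int.gcdB c1 c2 with hy
  have hbez : (d : ℤ) = c1 * x + c2 * y := by
    have := Int.gcd_eq_gcd_ab (c1 : ℤ) (c2 : ℤ)
    rwa [Int.gcd_natCast_natCast] at this
  refine ⟨fun j => (if j = 0 then 1 else 0) + (if j = n then (k':ℤ) else 0)
      + (if j = 1 then (-1 - x*T) else 0) + (if j = n-1 then (-(y*(T:ℤ))) else 0), ?_, ?_, ?_⟩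
  · have h1 : (0:ℕ) ≠ n := by omega
    have h2 : (0:ℕ) ≠ 1 := by omega
    have h3 : (0:ℕ) ≠ n-1 := by omega
    simp [h1, h2, h3]
  · have h1 : n ≠ 0 := by omega
    have h2 : n ≠ 1 := by omega
    have h3 : n ≠ n-1 := by omega
    simp [h1, h2, h3]
  · have key : ∑ j ∈ range (n+1),
        ((if j = 0 then (1:ℤ) else 0) + (if j = n then (k':ℤ) else 0)
        + (if j = 1 then (-1 - x*T) else 0) + (if j = n-1 then (-(y*(T:ℤ))) else 0)) * cz j
        = cz 0 + (k':ℤ) * cz n + (-1 - x*T) * cz 1 + (-(y*(T:ℤ))) * cz (n-1) := by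
      simp only [add_mul, Finset.sum_add_distrib, ite_mul, zero_mul, one_mul,
        Finset.sum_ite_eq' (range (n+1)), Finset.mem_range]
      rw [if_pos (by omega), if_pos (by omega), if_pos (by omega), if_pos (by omega)]
    rw [key, hcz0, hcast1, hcast2, hczn]
    have hTd : ((k':ℤ) * 3^n) = (d:ℤ) * T := by exact_mod_cast congrArg (Nat.cast (R := ℤ)) hT
    rw [hbez] at hTd
    ring_nf
    ring_nf at hTd
    linarith

theorem stmt17 (n : ℕ) (hn : 2 ≤ n)
    (k' u : ℕ) (hk' : 2 * n + 1 = k' * 3 ^ u) (hk'3 : ¬ 3 ∣ k') :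
    ∃ a : ℕ → ℤ, a 0 = 1 ∧ a n = (k' : ℤ) ∧
      (X ^ 2 - 3 : ℚ[X]) ∣
        ∑ j ∈ Finset.range (n + 1),
          C ((a j : ℚ) / (∏ i ∈ Finset.range (j + 1), (2 * (i : ℚ) + 1))) * X ^ (2 * j) := by
  obtain ⟨a, ha0, han, hsum⟩ := exists_coeffs n k' u hn hk' hk'3
  refine ⟨a, ha0, han, ?_⟩
  set q : ℕ → ℚ := fun j => (a j : ℚ) / (∏ i ∈ Finset.range (j + 1), (2 * (i : ℚ) + 1)) with hq
  -- rational sum is zero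
  have hpos : ∀ (s : Finset ℕ), (0:ℚ) < ∏ i ∈ s, (2 * (i : ℚ) + 1) :=
    fun s => Finset.prod_pos (fun i _ => by positivity)
  have hQ : ∑ j ∈ range (n+1), q j * 3^j = 0 := by
    have hsumQ : ∑ j ∈ range (n+1), (a j : ℚ) * (3^j * ∏ i ∈ Ico (j+1) (n+1), (2*(i:ℚ)+1)) = 0 := by
      have h := congrArg (fun z : ℤ => (z : ℚ)) hsum
      push_cast at h
      convert h using 2 with j
    have hterm : ∀ j ∈ range (n+1), q j * 3^j
        = ((a j : ℚ) * (3^j * ∏ i ∈ Ico (j+1) (n+1), (2*(i:ℚ)+1)))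
          / (∏ i ∈ range (n+1), (2*(i:ℚ)+1)) := by
      intro j hj
      have hU : (∏ i ∈ range (j+1), (2*(i:ℚ)+1)) * (∏ i ∈ Ico (j+1) (n+1), (2*(i:ℚ)+1))
          = ∏ i ∈ range (n+1), (2*(i:ℚ)+1) :=
        Finset.prod_range_mul_prod_Ico _ (by simp at hj; omega)
      rw [hq, ← hU]
      have h1 := (hpos (range (j+1))).ne'
      have h2 := (hpos (Ico (j+1) (n+1))).ne'
      field_simp
    rw [Finset.sum_congr rfl hterm, ← Finset.sum_div, hsumQ, zero_div]
  -- polynomial part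
  set g : ℚ[X] := ∑ j ∈ range (n+1), C (q j) * X^j with hg
  have hroot : g.IsRoot 3 := by
    simp only [Polynomial.IsRoot, hg, Polynomial.eval_finset_sum, Polynomial.eval_mul,
      Polynomial.eval_C, Polynomial.eval_pow, Polynomial.eval_X]
    exact hQ
  obtain ⟨h, hh⟩ := (Polynomial.dvd_iff_isRoot (p := g) (a := 3)).mpr hroot
  have hcomp : (∑ j ∈ Finset.range (n + 1), C (q j) * X ^ (2 * j) : ℚ[X]) = g.comp (X^2) := by
    rw [hg, Polynomial.comp, Polynomial.eval₂_finset_sum]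
    refine Finset.sum_congr rfl (fun j _ => ?_)
    simp [pow_mul]
  rw [hcomp, hh]
  have : ((X : ℚ[X]) - C 3).comp (X^2) = X^2 - 3 := by
    have h3 : (C (3:ℚ)) = (3 : ℚ[X]) := map_ofNat C 3
    simp [h3]
  rw [Polynomial.mul_comp, ← this]
  exact Dvd.intro _ rfl
end
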